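/- For all integers n and k, qbinom(n,k) = qbinom(n, n-k), i.e., the basic symmetry of the Gaussian binomial coefficient extends to all integer entries. -/

import Mathlib

open LaurentPolynomial in
/-- The ordinary Gaussian binomial coefficient as a (Laurent) polynomial in `q = T 1`,
defined by the `q`-Pascal rule; it is `0` when the lower entry exceeds the upper one. -/
noncomputable def gauss : ℕ → ℕ → LaurentPolynomial ℤ
  | _, 0 => 1
  | 0, _ + 1 => 0
  | a + 1, b + 1 => gauss a b + T ((b : ℤ) + 1) * gauss a (b + 1)

open LaurentPolynomial in
/-- The generalized `q`-binomial coefficient, a Laurent polynomial in `q = T 1`,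
extended to arbitrary integer entries. -/
noncomputable def qbinom (n k : ℤ) : LaurentPolynomial ℤ :=
  if 0 ≤ k ∧ k ≤ n then gauss n.toNat k.toNat
  else if n < 0 ∧ 0 ≤ k then
    (-1) ^ k.toNat * T (k * (2 * n - k + 1) / 2) * gauss (k - n - 1).toNat k.toNat
  else if k ≤ n ∧ n < 0 then
    (-1) ^ (n - k).toNat * T ((n * (n + 1) - k * (k + 1)) / 2) *
      gauss (-k - 1).toNat (-n - 1).toNat
  else 0

/-!
Inside the range `0 ≤ k ≤ n` this is the classical symmetry of Gaussian binomials, which follows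
by induction from the two `q`-Pascal rules. For `n < 0` the reflection `k ↦ n - k` exchanges the
branches `n < 0 ≤ k` and `k ≤ n < 0` of `qbinom`; matching them uses the classical symmetry
`gauss (k - n - 1) k = gauss (k - n - 1) (-n - 1)`, equal signs `(-1) ^ k`, and the exponent
identity `k (2n - k + 1) = n (n + 1) - (n - k) (n - k + 1)`. Everywhere else both sides vanish.
-/

open LaurentPolynomial

lemma gauss_zero_right (a : ℕ) : gauss a 0 = 1 := by cases a <;> rfl

lemma gauss_succ_succ (a b : ℕ) :
    gauss (a + 1) (b + 1) = gauss a b + T ((b : ℤ) + 1) * gauss a (b + 1) := rfl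

lemma gauss_eq_zero_of_lt : ∀ {a b : ℕ}, a < b → gauss a b = 0
  | 0, _ + 1, _ => rfl
  | a + 1, b + 1, h => by
    rw [gauss_succ_succ, gauss_eq_zero_of_lt (by omega : a < b),
      gauss_eq_zero_of_lt (by omega : a < b + 1)]
    ring

lemma gauss_self : ∀ a : ℕ, gauss a a = 1
  | 0 => rfl
  | a + 1 => by rw [gauss_succ_succ, gauss_self a, gauss_eq_zero_of_lt (Nat.lt_succ_self a)]; ring

lemma gauss_succ_succ' : ∀ a b : ℕ,
    gauss (a + 1) (b + 1) = T ((a : ℤ) - b) * gauss a b + gauss a (b + 1)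
  | 0, b => by
    rw [gauss_succ_succ, gauss_eq_zero_of_lt (Nat.succ_pos b)]
    cases b <;> simp [gauss_zero_right, gauss_eq_zero_of_lt]
  | a + 1, 0 => by
    have ih := gauss_succ_succ' a 0
    have hpascal := gauss_succ_succ a 0
    simp only [gauss_zero_right, mul_one] at ih hpascal ⊢
    rw [gauss_succ_succ, gauss_zero_right]
    have hT : (T 1 * T a : LaurentPolynomial ℤ) = T ((a : ℤ) + 1) := by rw [← T_add, add_comm]
    push_cast at ih hpascal ⊢
    linear_combination (norm := ring_nf) T (1 : ℤ) * ih - hpascal + hT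
  | a + 1, b + 1 => by
    have ih₁ := gauss_succ_succ' a b
    have ih₂ := gauss_succ_succ' a (b + 1)
    have hpascal₁ := gauss_succ_succ a b
    have hpascal₂ := gauss_succ_succ a (b + 1)
    have hT : (T ((b : ℤ) + 2) * T ((a : ℤ) - b - 1) : LaurentPolynomial ℤ) =
        T ((a : ℤ) - b) * T ((b : ℤ) + 1) := by
      rw [← T_add, ← T_add]; ring_nf
    rw [gauss_succ_succ (a + 1)]
    push_cast at ih₂ hpascal₂ ⊢
    linear_combination (norm := ring_nf)
      ih₁ - T ((a : ℤ) - b) * hpascal₁ + T ((b : ℤ) + 2) * ih₂ - hpascal₂ + gauss a (b + 1) * hT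

lemma gauss_add_symm : ∀ a b : ℕ, gauss (a + b) a = gauss (a + b) b
  | 0, b => by rw [Nat.zero_add, gauss_zero_right, gauss_self]
  | a + 1, 0 => by rw [Nat.add_zero, gauss_zero_right, gauss_self]
  | a + 1, b + 1 => by
    have h₁ := gauss_add_symm a (b + 1)
    have h₂ := gauss_add_symm (a + 1) b
    rw [show a + 1 + (b + 1) = a + b + 1 + 1 by omega, gauss_succ_succ' (a + b + 1) a,
      gauss_succ_succ (a + b + 1) b]
    rw [show a + (b + 1) = a + b + 1 by omega] at h₁
    rw [show a + 1 + b = a + b + 1 by omega] at h₂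
    rw [h₁, h₂, show ((a + b + 1 : ℕ) : ℤ) - a = (b : ℤ) + 1 by push_cast; ring]
    ring

lemma gauss_symm {a b : ℕ} (h : b ≤ a) : gauss a b = gauss a (a - b) := by
  obtain ⟨c, rfl⟩ := Nat.exists_eq_add_of_le h
  rw [Nat.add_sub_cancel_left, gauss_add_symm]

section qbinom

variable {n k : ℤ}

lemma qbinom_of_nonneg_of_le (hk : 0 ≤ k) (hkn : k ≤ n) :
    qbinom n k = gauss n.toNat k.toNat :=
  if_pos ⟨hk, hkn⟩

lemma qbinom_of_neg_of_nonneg (hn : n < 0) (hk : 0 ≤ k) :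
    qbinom n k =
      (-1) ^ k.toNat * T (k * (2 * n - k + 1) / 2) * gauss (k - n - 1).toNat k.toNat := by
  rw [qbinom, if_neg (by omega), if_pos ⟨hn, hk⟩]

lemma qbinom_of_le_of_neg (hkn : k ≤ n) (hn : n < 0) :
    qbinom n k = (-1) ^ (n - k).toNat * T ((n * (n + 1) - k * (k + 1)) / 2) *
      gauss (-k - 1).toNat (-n - 1).toNat := by
  rw [qbinom, if_neg (by omega), if_neg (by omega), if_pos ⟨hkn, hn⟩]

lemma qbinom_symm_of_neg_of_nonneg (hn : n < 0) (hk : 0 ≤ k) :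
    qbinom n k = qbinom n (n - k) := by
  rw [qbinom_of_neg_of_nonneg hn hk, qbinom_of_le_of_neg (by omega) hn,
    gauss_symm (by omega : k.toNat ≤ (k - n - 1).toNat)]
  have hsign : (n - (n - k)).toNat = k.toNat := by omega
  have hexp : k * (2 * n - k + 1) = n * (n + 1) - (n - k) * (n - k + 1) := by ring
  have hupper : (k - n - 1).toNat = (-(n - k) - 1).toNat := by omega
  have hlower : (k - n - 1).toNat - k.toNat = (-n - 1).toNat := by omega
  rw [hsign, hexp, hlower, hupper]

end qbinom

theorem qbinom_symm (n k : ℤ) : qbinom n k = qbinom n (n - k) := by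
  by_cases h₁ : 0 ≤ k ∧ k ≤ n
  · rw [qbinom_of_nonneg_of_le h₁.1 h₁.2, qbinom_of_nonneg_of_le (by omega) (by omega),
      gauss_symm (by omega)]
    congr 1
    omega
  by_cases h₂ : n < 0 ∧ 0 ≤ k
  · exact qbinom_symm_of_neg_of_nonneg h₂.1 h₂.2
  by_cases h₃ : k ≤ n ∧ n < 0
  · simpa using (qbinom_symm_of_neg_of_nonneg h₃.2 (sub_nonneg.2 h₃.1)).symm
  · rw [qbinom, qbinom, if_neg h₁, if_neg h₂, if_neg h₃, if_neg (by omega), if_neg (by omega),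
      if_neg (by omega)]
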